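/- The variance σ_n² = ℬ_n''(1)/ℬ_n(1) + μ_n − μ_n², where μ_n = ℬ_n'(1)/ℬ_n(1), satisfies σ_n²/n → 1/12 as n → ∞. In particular σ_n² → +∞. -/

import Mathlib

/-!
Writing `P n j = C(n+1,j) C(n+1,j+1) C(n+1,j+2)`, we have `D n (j+1) ∝ P n j`. The symmetry
`P n (n-1-j) = P n j` puts the mean at `(n+1)/2` and, combined with
`(n+2)³ P n j = (n+2-j)(n+1-j)(n-j) P (n+1) j`, expresses the second factorial moment through
`T n = ∑ⱼ P n j`:
`σ²(n+1) = n(n+1)/6 + (n+2)/2 - (n+2)²/4 + (2/3)(n+2)² T n / T (n+1)`.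
The sums `T n` satisfy a three-term recurrence (Zeilberger), from which induction gives
`8 n² T (n-1) / T n = n² + n ± 8`; substituting, `σ²(n) = n/12 + O(1)`.
-/

open Finset

noncomputable def D (n k : ℕ) : ℝ :=
  if k = 0 then 0 else
    2 / (n * (n + 1) ^ 2) * (Nat.choose (n + 1) (k - 1)) *
      (Nat.choose (n + 1) k) * (Nat.choose (n + 1) (k + 1))

noncomputable def B (n : ℕ) : ℝ := if n = 0 then 1 else ∑ k ∈ Icc 1 n, D n k

noncomputable def g (n : ℕ) : ℝ := ∑ k ∈ range (n + 1), (k : ℝ) * D n k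

noncomputable def h (n : ℕ) : ℝ := ∑ k ∈ range (n + 1), (k : ℝ) * ((k : ℝ) - 1) * D n k

noncomputable def mu (n : ℕ) : ℝ := g n / B n

noncomputable def sigmaSq (n : ℕ) : ℝ := h n / B n + mu n - (mu n) ^ 2

noncomputable def chooseTriple (n j : ℕ) : ℝ :=
  (n + 1).choose j * (n + 1).choose (j + 1) * (n + 1).choose (j + 2)

/-- `n (n + 1)² / 2` times the `n`-th Baxter number. -/
noncomputable def chooseTripleSum (n : ℕ) : ℝ := ∑ j ∈ range n, chooseTriple n j

lemma cast_choose_succ_right_eq (a j : ℕ) :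
    (a.choose (j + 1) : ℝ) * (j + 1) = a.choose j * (a - j) := by
  rcases le_or_gt j a with hja | hja
  · have := congrArg (Nat.cast (R := ℝ)) (Nat.choose_succ_right_eq a j)
    push_cast [Nat.cast_sub hja] at this
    exact this
  · simp [Nat.choose_eq_zero_of_lt hja, Nat.choose_eq_zero_of_lt (Nat.lt_succ_of_lt hja)]

lemma cast_choose_mul_succ_eq (a j : ℕ) :
    (a.choose j : ℝ) * (a + 1) = (a + 1).choose j * (a + 1 - j) := by
  rcases le_or_gt j (a + 1) with hja | hja
  · have := congrArg (Nat.cast (R := ℝ)) (Nat.choose_mul_succ_eq a j)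
    push_cast [Nat.cast_sub hja] at this
    exact this
  · simp [Nat.choose_eq_zero_of_lt hja, Nat.choose_eq_zero_of_lt (Nat.lt_of_succ_lt hja)]

lemma chooseTriple_succ_right (n j : ℕ) :
    ((j : ℝ) + 1) * (j + 2) * (j + 3) * chooseTriple n (j + 1)
      = ((n : ℝ) + 1 - j) * (n - j) * (n - 1 - j) * chooseTriple n j := by
  have e1 := cast_choose_succ_right_eq (n + 1) j
  have e2 := cast_choose_succ_right_eq (n + 1) (j + 1)
  have e3 := cast_choose_succ_right_eq (n + 1) (j + 2)
  push_cast at e1 e2 e3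
  simp only [chooseTriple]
  linear_combination ((j + 2 : ℝ) * (j + 3) * (n + 1).choose (j + 2) * (n + 1).choose (j + 3)) * e1
    + ((j + 3 : ℝ) * (n + 1 - j) * (n + 1).choose j * (n + 1).choose (j + 3)) * e2
    + (((n : ℝ) + 1 - j) * (n - j) * (n + 1).choose j * (n + 1).choose (j + 1)) * e3

lemma chooseTriple_succ_left (n j : ℕ) :
    ((n : ℝ) + 2) ^ 3 * chooseTriple n j
      = ((n : ℝ) + 2 - j) * (n + 1 - j) * (n - j) * chooseTriple (n + 1) j := by
  have e1 := cast_choose_mul_succ_eq (n + 1) j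
  have e2 := cast_choose_mul_succ_eq (n + 1) (j + 1)
  have e3 := cast_choose_mul_succ_eq (n + 1) (j + 2)
  push_cast at e1 e2 e3
  simp only [chooseTriple]
  linear_combination (((n : ℝ) + 2) ^ 2 * (n + 1).choose (j + 1) * (n + 1).choose (j + 2)) * e1
    + (((n : ℝ) + 2) * (n + 2 - j) * (n + 2).choose j * (n + 1).choose (j + 2)) * e2
    + (((n : ℝ) + 2 - j) * (n + 1 - j) * (n + 2).choose j * (n + 2).choose (j + 1)) * e3

lemma chooseTriple_eq_zero_of_le {n j : ℕ} (h : n ≤ j) : chooseTriple n j = 0 := by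
  simp [chooseTriple, Nat.choose_eq_zero_of_lt (show n + 1 < j + 2 by omega)]

lemma chooseTriple_reflect {n j : ℕ} (h : j < n) : chooseTriple n (n - 1 - j) = chooseTriple n j := by
  simp only [chooseTriple]
  rw [Nat.choose_symm_of_eq_add (show n + 1 = n - 1 - j + (j + 2) by omega),
    Nat.choose_symm_of_eq_add (show n + 1 = n - 1 - j + 1 + (j + 1) by omega),
    Nat.choose_symm_of_eq_add (show n + 1 = n - 1 - j + 2 + j by omega)]
  ring

lemma chooseTripleSum_pos {n : ℕ} (hn : 0 < n) : 0 < chooseTripleSum n := by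
  refine sum_pos' (fun j _ => by unfold chooseTriple; positivity) ⟨0, mem_range.2 hn, ?_⟩
  have h1 : 0 < (n + 1).choose 1 := Nat.choose_pos (by omega)
  have h2 : 0 < (n + 1).choose 2 := Nat.choose_pos (by omega)
  simp only [chooseTriple, Nat.choose_zero_right]
  positivity

lemma sum_range_chooseTriple_of_le {n m : ℕ} (h : n ≤ m) :
    ∑ j ∈ range m, chooseTriple n j = chooseTripleSum n :=
  (sum_subset (range_subset_range.2 h) fun _ _ hj =>
    chooseTriple_eq_zero_of_le (by simpa using hj)).symm

lemma cast_sub_one_sub_of_lt {n j : ℕ} (h : j < n) : ((n - 1 - j : ℕ) : ℝ) = n - 1 - j := by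
  have : n - 1 - j + j + 1 = n := by omega
  have : ((n - 1 - j : ℕ) : ℝ) + j + 1 = n := by exact_mod_cast this
  linarith

lemma sum_mul_chooseTriple_eq_zero_of_antisymm (n : ℕ) (f : ℕ → ℝ)
    (hf : ∀ j < n, f (n - 1 - j) = -f j) : ∑ j ∈ range n, f j * chooseTriple n j = 0 := by
  have h := sum_range_reflect (fun j => f j * chooseTriple n j) n
  rw [sum_congr rfl fun j hj => by
    rw [hf j (mem_range.1 hj), chooseTriple_reflect (mem_range.1 hj)]] at h
  simp only [neg_mul, sum_neg_distrib] at h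
  linarith

lemma sum_succ_mul_chooseTriple (n : ℕ) :
    ∑ j ∈ range n, ((j : ℝ) + 1) * chooseTriple n j = ((n : ℝ) + 1) / 2 * chooseTripleSum n := by
  have h := sum_mul_chooseTriple_eq_zero_of_antisymm n (fun j => (j : ℝ) + 1 - (n + 1) / 2)
    fun j hj => by simp only [cast_sub_one_sub_of_lt hj]; ring
  simp only [sub_mul, sum_sub_distrib] at h
  rw [chooseTripleSum, mul_sum]
  linarith

lemma sum_falling_mul_chooseTriple_succ (n : ℕ) :
    ∑ j ∈ range (n + 1), ((n : ℝ) + 2 - j) * (n + 1 - j) * (n - j) * chooseTriple (n + 1) j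
      = ((n : ℝ) + 2) ^ 3 * chooseTripleSum n := by
  rw [← sum_range_chooseTriple_of_le n.le_succ, mul_sum]
  exact sum_congr rfl fun j _ => (chooseTriple_succ_left n j).symm

lemma sum_succ_mul_self_mul_chooseTriple_succ (n : ℕ) :
    ∑ j ∈ range (n + 1), ((j : ℝ) + 1) * j * chooseTriple (n + 1) j
      = ((n : ℝ) + 1) * n / 6 * chooseTripleSum (n + 1)
        + 2 / 3 * ((n : ℝ) + 2) ^ 2 * chooseTripleSum n := by
  -- the weight is odd under `j ↦ n - j`, and its cubic part turns `chooseTriple (n + 1)`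
  -- into a multiple of `chooseTriple n`
  have h := sum_mul_chooseTriple_eq_zero_of_antisymm (n + 1)
    (fun j => 3 * ((n : ℝ) + 2) * ((j + 1) * j - (n + 1) * n / 6)
      - 2 * ((n + 2 - j) * (n + 1 - j) * (n - j)))
    fun j hj => by simp only [cast_sub_one_sub_of_lt hj]; push_cast; ring
  have hexpand : ∑ j ∈ range (n + 1), (3 * ((n : ℝ) + 2) * ((j + 1) * j - (n + 1) * n / 6)
        - 2 * ((n + 2 - j) * (n + 1 - j) * (n - j))) * chooseTriple (n + 1) j
      = 3 * ((n : ℝ) + 2) * ∑ j ∈ range (n + 1), ((j : ℝ) + 1) * j * chooseTriple (n + 1) j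
        - 3 * ((n : ℝ) + 2) * ((n + 1) * n / 6) * chooseTripleSum (n + 1)
        - 2 * ∑ j ∈ range (n + 1),
          ((n : ℝ) + 2 - j) * (n + 1 - j) * (n - j) * chooseTriple (n + 1) j := by
    simp only [chooseTripleSum, mul_sum, ← sum_sub_distrib]
    exact sum_congr rfl fun j _ => by ring
  rw [hexpand, sum_falling_mul_chooseTriple_succ] at h
  have hn : (0 : ℝ) < 3 * (n + 2) := by positivity
  apply mul_left_cancel₀ hn.ne'
  linear_combination h

/-- Zeilberger certificate for `chooseTripleSum_recurrence`. -/
noncomputable def baxterCertificate (x y : ℝ) : ℝ :=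
  x ^ 2 * (x + 1) ^ 2 * (y * (14 * x + 32 * x ^ 2 + 14 * x ^ 3) + y ^ 2 * (-8 - 39 * x - 27 * x ^ 2)
    + y ^ 3 * (12 + 4 * x - 32 * x ^ 2 - 14 * x ^ 3) + y ^ 4 * (4 + 39 * x + 27 * x ^ 2)
    + y ^ 5 * (-12 - 18 * x) + 4 * y ^ 6)

lemma chooseTriple_recurrence_telescopes (n j : ℕ) (x : ℝ) (hx : x = n + 2) :
    (x + 1) ^ 3 * x ^ 3 * (x * (x - 1) * (x + 2) * (x + 3) * chooseTriple (n + 2) j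
      - (7 * x ^ 2 + 7 * x - 2) * (x + 1) ^ 2 * chooseTriple (n + 1) j
      - 8 * x ^ 2 * (x + 1) ^ 2 * chooseTriple n j)
    = baxterCertificate x ((j + 1 : ℕ) + 1) * chooseTriple (n + 2) (j + 1)
      - baxterCertificate x (j + 1) * chooseTriple (n + 2) j := by
  have e1 := chooseTriple_succ_right (n + 2) j
  have e2 := chooseTriple_succ_left (n + 1) j
  have e3 := chooseTriple_succ_left n j
  push_cast at e1 e2 e3 ⊢
  rw [show (n : ℝ) = x - 2 by rw [hx]; ring] at e1 e2 e3
  set J : ℝ := (j : ℝ)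
  have hJ : (J + 1) * (J + 2) * (J + 3) ≠ 0 := by positivity
  apply mul_left_cancel₀ hJ
  linear_combination (norm := skip) -baxterCertificate x (J + 2) * e1
    - (J + 1) * (J + 2) * (J + 3) * (x ^ 3 * (7 * x ^ 2 + 7 * x - 2) * (x + 1) ^ 2
        + 8 * x ^ 2 * (x + 1) ^ 2 * (x - J) * (x - 1 - J) * (x - 2 - J)) * e2
    - (J + 1) * (J + 2) * (J + 3) * 8 * x ^ 2 * (x + 1) ^ 5 * e3
  simp only [baxterCertificate]
  ring

lemma chooseTripleSum_recurrence (n : ℕ) :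
    ((n : ℝ) + 2) * (n + 1) * (n + 4) * (n + 5) * chooseTripleSum (n + 2)
      = (7 * ((n : ℝ) + 2) ^ 2 + 7 * (n + 2) - 2) * (n + 3) ^ 2 * chooseTripleSum (n + 1)
        + 8 * ((n : ℝ) + 2) ^ 2 * (n + 3) ^ 2 * chooseTripleSum n := by
  set x : ℝ := n + 2 with hx
  have htel : ∑ j ∈ range (n + 2), (x + 1) ^ 3 * x ^ 3 *
      (x * (x - 1) * (x + 2) * (x + 3) * chooseTriple (n + 2) j
        - (7 * x ^ 2 + 7 * x - 2) * (x + 1) ^ 2 * chooseTriple (n + 1) j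
        - 8 * x ^ 2 * (x + 1) ^ 2 * chooseTriple n j)
      = baxterCertificate x ((n + 2 : ℕ) + 1) * chooseTriple (n + 2) (n + 2)
        - baxterCertificate x ((0 : ℕ) + 1) * chooseTriple (n + 2) 0 := by
    rw [← sum_range_sub (fun j : ℕ => baxterCertificate x (j + 1) * chooseTriple (n + 2) j)]
    exact sum_congr rfl fun j _ => chooseTriple_recurrence_telescopes n j x hx
  have hcert : baxterCertificate x ((0 : ℕ) + 1) = 0 := by
    simp only [baxterCertificate]; push_cast; ring
  rw [hcert, chooseTriple_eq_zero_of_le le_rfl, ← mul_sum, sum_sub_distrib, sum_sub_distrib,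
    ← mul_sum, ← mul_sum, ← mul_sum, sum_range_chooseTriple_of_le (by omega : n + 1 ≤ n + 2),
    sum_range_chooseTriple_of_le (by omega : n ≤ n + 2)] at htel
  have hx0 : (x + 1) ^ 3 * x ^ 3 ≠ 0 := by positivity
  have := (mul_eq_zero.1 (htel.trans (by ring))).resolve_left hx0
  unfold chooseTripleSum at this ⊢
  linear_combination this

lemma ratio_lower_bound_step {x a b c : ℝ} (hx : 3 ≤ x) (hb : 0 ≤ b)
    (hrec : (x + 1) * x * (x + 3) * (x + 4) * c
      = (7 * (x + 1) ^ 2 + 7 * (x + 1) - 2) * (x + 2) ^ 2 * b + 8 * (x + 1) ^ 2 * (x + 2) ^ 2 * a)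
    (hab : 8 * x ^ 2 * a ≤ (x ^ 2 + x + 8) * b) :
    ((x + 1) ^ 2 + (x + 1) - 8) * c ≤ 8 * (x + 1) ^ 2 * b := by
  obtain ⟨y, hy, rfl⟩ : ∃ y, 0 ≤ y ∧ x = y + 3 := ⟨x - 3, by linarith, by ring⟩
  have hL : 0 ≤ (y + 4) ^ 2 + (y + 4) - 8 := by nlinarith
  have hM : 0 < 8 * (y + 3) ^ 2 * ((y + 4) * (y + 3) * (y + 6) * (y + 7)) := by positivity
  refine le_of_mul_le_mul_left ?_ hM
  -- the gap left once `hrec` and `hab` are substituted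
  have hpoly : 0 ≤ (896064 + 1254288 * y + 731096 * y ^ 2 + 226288 * y ^ 3 + 39136 * y ^ 4
      + 3584 * y ^ 5 + 136 * y ^ 6) * b := by positivity
  have ha := mul_le_mul_of_nonneg_left hab
    (mul_nonneg hL (by positivity : (0 : ℝ) ≤ 8 * (y + 4) ^ 2 * (y + 5) ^ 2))
  have hrec' : 8 * (y + 3) ^ 2 * ((y + 4) * (y + 3) * (y + 6) * (y + 7))
        * (((y + 4) ^ 2 + (y + 4) - 8) * c)
      = ((y + 4) ^ 2 + (y + 4) - 8) * (8 * (y + 3) ^ 2)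
          * ((7 * (y + 4) ^ 2 + 7 * (y + 4) - 2) * (y + 5) ^ 2 * b)
        + ((y + 4) ^ 2 + (y + 4) - 8) * (8 * (y + 4) ^ 2 * (y + 5) ^ 2) * (8 * (y + 3) ^ 2 * a) := by
    linear_combination (8 * (y + 3) ^ 2 * ((y + 4) ^ 2 + (y + 4) - 8)) * hrec
  linarith

lemma ratio_upper_bound_step {x a b c : ℝ} (hx : 3 ≤ x) (hb : 0 ≤ b)
    (hrec : (x + 1) * x * (x + 3) * (x + 4) * c
      = (7 * (x + 1) ^ 2 + 7 * (x + 1) - 2) * (x + 2) ^ 2 * b + 8 * (x + 1) ^ 2 * (x + 2) ^ 2 * a)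
    (hab : (x ^ 2 + x - 8) * b ≤ 8 * x ^ 2 * a) :
    8 * (x + 1) ^ 2 * b ≤ ((x + 1) ^ 2 + (x + 1) + 8) * c := by
  obtain ⟨y, hy, rfl⟩ : ∃ y, 0 ≤ y ∧ x = y + 3 := ⟨x - 3, by linarith, by ring⟩
  have hM : 0 < 8 * (y + 3) ^ 2 * ((y + 4) * (y + 3) * (y + 6) * (y + 7)) := by positivity
  refine le_of_mul_le_mul_left ?_ hM
  have hpoly : 0 ≤ (2668736 + 4328432 * y + 2850216 * y ^ 2 + 979984 * y ^ 3 + 186144 * y ^ 4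
      + 18560 * y ^ 5 + 760 * y ^ 6) * b := by positivity
  have ha := mul_le_mul_of_nonneg_left hab
    (by positivity : (0 : ℝ) ≤ ((y + 4) ^ 2 + (y + 4) + 8) * (8 * (y + 4) ^ 2 * (y + 5) ^ 2))
  have hrec' : 8 * (y + 3) ^ 2 * ((y + 4) * (y + 3) * (y + 6) * (y + 7))
        * (((y + 4) ^ 2 + (y + 4) + 8) * c)
      = ((y + 4) ^ 2 + (y + 4) + 8) * (8 * (y + 3) ^ 2)
          * ((7 * (y + 4) ^ 2 + 7 * (y + 4) - 2) * (y + 5) ^ 2 * b)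
        + ((y + 4) ^ 2 + (y + 4) + 8) * (8 * (y + 4) ^ 2 * (y + 5) ^ 2) * (8 * (y + 3) ^ 2 * a) := by
    linear_combination (8 * (y + 3) ^ 2 * ((y + 4) ^ 2 + (y + 4) + 8)) * hrec
  linarith

lemma chooseTripleSum_ratio_bounds {n : ℕ} (hn : 2 ≤ n) :
    (((n : ℝ) + 1) ^ 2 + (n + 1) - 8) * chooseTripleSum (n + 1)
      ≤ 8 * ((n : ℝ) + 1) ^ 2 * chooseTripleSum n ∧ 8 * ((n : ℝ) + 1) ^ 2 * chooseTripleSum n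
      ≤ (((n : ℝ) + 1) ^ 2 + (n + 1) + 8) * chooseTripleSum (n + 1) := by
  induction n, hn using Nat.le_induction with
  | base => norm_num [chooseTripleSum, chooseTriple, sum_range_succ, Nat.choose]
  | succ n hn ih =>
    have hx : (3 : ℝ) ≤ n + 1 := by norm_cast; omega
    have hb := (chooseTripleSum_pos (show 0 < n + 1 by omega)).le
    have hrec : ((n : ℝ) + 1 + 1) * (n + 1) * (n + 1 + 3) * (n + 1 + 4) * chooseTripleSum (n + 2)
        = (7 * ((n : ℝ) + 1 + 1) ^ 2 + 7 * (n + 1 + 1) - 2) * (n + 1 + 2) ^ 2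
            * chooseTripleSum (n + 1)
          + 8 * ((n : ℝ) + 1 + 1) ^ 2 * (n + 1 + 2) ^ 2 * chooseTripleSum n := by
      linear_combination chooseTripleSum_recurrence n
    push_cast
    exact ⟨ratio_lower_bound_step hx hb hrec ih.2, ratio_upper_bound_step hx hb hrec ih.1⟩

lemma D_succ (n j : ℕ) : D n (j + 1) = 2 / (n * ((n : ℝ) + 1) ^ 2) * chooseTriple n j := by
  rw [D, if_neg j.succ_ne_zero, Nat.add_sub_cancel, chooseTriple]
  ring

lemma sum_range_succ_mul_D (n : ℕ) (f : ℕ → ℝ) :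
    ∑ k ∈ range (n + 1), f k * D n k
      = 2 / (n * ((n : ℝ) + 1) ^ 2) * ∑ j ∈ range n, f (j + 1) * chooseTriple n j := by
  rw [sum_range_succ', mul_sum, show D n 0 = 0 from if_pos rfl, mul_zero, add_zero]
  exact sum_congr rfl fun j _ => by rw [D_succ]; ring

lemma B_succ (n : ℕ) :
    B (n + 1) = 2 / (((n : ℝ) + 1) * ((n : ℝ) + 2) ^ 2) * chooseTripleSum (n + 1) := by
  rw [B, if_neg n.succ_ne_zero, ← Ico_add_one_right_eq_Icc, sum_Ico_eq_sum_range, chooseTripleSum,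
    mul_sum, Nat.add_sub_cancel]
  refine sum_congr rfl fun j _ => ?_
  rw [add_comm 1 j, D_succ]
  push_cast
  ring

lemma g_eq_mul_chooseTripleSum (n : ℕ) :
    g n = 2 / (n * ((n : ℝ) + 1) ^ 2) * (((n : ℝ) + 1) / 2 * chooseTripleSum n) := by
  rw [g, sum_range_succ_mul_D, ← sum_succ_mul_chooseTriple]
  push_cast
  ring

lemma h_succ (n : ℕ) :
    h (n + 1) = 2 / (((n : ℝ) + 1) * ((n : ℝ) + 2) ^ 2)
      * (((n : ℝ) + 1) * n / 6 * chooseTripleSum (n + 1)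
        + 2 / 3 * ((n : ℝ) + 2) ^ 2 * chooseTripleSum n) := by
  rw [h, sum_range_succ_mul_D, ← sum_succ_mul_self_mul_chooseTriple_succ]
  push_cast
  simp only [add_sub_cancel_right]
  ring

lemma sigmaSq_succ (n : ℕ) :
    sigmaSq (n + 1) = ((n : ℝ) + 1) * n / 6 + ((n : ℝ) + 2) / 2 - (((n : ℝ) + 2) / 2) ^ 2
      + 2 / 3 * ((n : ℝ) + 2) ^ 2 * (chooseTripleSum n / chooseTripleSum (n + 1)) := by
  have hT := (chooseTripleSum_pos n.succ_pos).ne'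
  have hc : 2 / (((n : ℝ) + 1) * ((n : ℝ) + 2) ^ 2) ≠ 0 := by positivity
  have hmu : mu (n + 1) = ((n : ℝ) + 2) / 2 := by
    rw [mu, g_eq_mul_chooseTripleSum, B_succ]
    push_cast
    field_simp
    ring
  rw [sigmaSq, hmu, h_succ, B_succ]
  field_simp
  ring

lemma abs_sigmaSq_sub_le {n : ℕ} (hn : 3 ≤ n) : |sigmaSq n - n / 12| ≤ 2 := by
  obtain ⟨m, rfl⟩ : ∃ m, n = m + 1 := ⟨n - 1, by omega⟩
  have hT := chooseTripleSum_pos m.succ_pos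
  obtain ⟨hlo, hhi⟩ := chooseTripleSum_ratio_bounds (show 2 ≤ m by omega)
  rw [← div_mul_cancel₀ (chooseTripleSum m) hT.ne'] at hlo hhi
  rw [sigmaSq_succ]
  generalize chooseTripleSum m / chooseTripleSum (m + 1) = r at hlo hhi ⊢
  obtain ⟨N, hN⟩ : ∃ N : ℝ, N = m + 1 := ⟨_, rfl⟩
  have hN3 : 3 ≤ N := by rw [hN]; exact_mod_cast hn
  push_cast
  rw [show (m : ℝ) = N - 1 by linarith] at hlo hhi ⊢
  have hr : |8 * N ^ 2 * r - (N ^ 2 + N)| ≤ 8 := by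
    rw [abs_sub_le_iff]
    constructor
    · nlinarith
    · nlinarith
  have hden : 0 < 12 * N ^ 2 := by positivity
  have hid : (N - 1 + 1) * (N - 1) / 6 + (N - 1 + 2) / 2 - ((N - 1 + 2) / 2) ^ 2
        + 2 / 3 * (N - 1 + 2) ^ 2 * r - (N - 1 + 1) / 12
      = (6 * N ^ 2 + N + (N + 1) ^ 2 * (8 * N ^ 2 * r - (N ^ 2 + N))) / (12 * N ^ 2) := by
    field_simp
    ring
  rw [hid, abs_div, abs_of_pos hden, div_le_iff₀ hden]
  calc |6 * N ^ 2 + N + (N + 1) ^ 2 * (8 * N ^ 2 * r - (N ^ 2 + N))|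
      ≤ 6 * N ^ 2 + N + (N + 1) ^ 2 * 8 := by
        refine (abs_add_le _ _).trans (add_le_add (abs_of_pos (by positivity)).le ?_)
        rw [abs_mul, abs_of_nonneg (by positivity)]
        exact mul_le_mul_of_nonneg_left hr (by positivity)
    _ ≤ 2 * (12 * N ^ 2) := by nlinarith

theorem baxter_variance_asymptotic :
    Filter.Tendsto (fun n : ℕ => sigmaSq n / n) Filter.atTop (nhds (1 / 12)) ∧
    Filter.Tendsto (fun n : ℕ => sigmaSq n) Filter.atTop Filter.atTop := by
  have hdev : ∀ᶠ n : ℕ in Filter.atTop, |sigmaSq n - n / 12| ≤ 2 :=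
    Filter.eventually_atTop.2 ⟨3, fun n hn => abs_sigmaSq_sub_le hn⟩
  constructor
  · rw [← tendsto_sub_nhds_zero_iff]
    refine squeeze_zero_norm' ?_ (tendsto_const_div_atTop_nhds_zero_nat 2)
    filter_upwards [hdev, Filter.eventually_gt_atTop 0] with n hn hpos
    have hpos : (0 : ℝ) < n := by exact_mod_cast hpos
    rw [Real.norm_eq_abs, show sigmaSq n / n - 1 / 12 = (sigmaSq n - n / 12) / n by field_simp,
      abs_div, abs_of_pos hpos]
    exact div_le_div_of_nonneg_right hn hpos.le
  · refine Filter.tendsto_atTop_mono' _ ?_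
      (Filter.tendsto_atTop_add_const_right _ (-2)
        ((tendsto_natCast_atTop_atTop (R := ℝ)).atTop_div_const (by norm_num : (0 : ℝ) < 12)))
    filter_upwards [hdev] with n hn
    linarith [neg_abs_le (sigmaSq n - n / 12)]
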